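/- arXiv:1803.09479 — 6 statements merged into one kernel-verified Lean document; each statement's English description precedes it below -/
import Mathlib

section
/- For every θ > 0, h > 0 and ω ∈ ℝ, the series ∑_{k ∈ ℤ} θ/((ω + k/h)² + θ²) converges and equals π h · coth(π θ h) / (1 + sin²(π h ω) · (coth²(π θ h) − 1)). -/
/-!
The terms are imaginary parts of a partial-fraction series: with `z = hω + ihθ`,
`θ / ((ω + k/h)² + θ²) = -h · Im (1 / (z + k))`. The Mittag-Leffler expansion of the cotangent,
`π cot (π z) = ∑ₖ 1 / (z + k)` (summed symmetrically), is absolutely convergent after taking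
imaginary parts, and `Im cot (a + ib) = -sinh b cosh b / (sin² a + sinh² b)`; rewriting
`sinh² c = 1 / (coth² c - 1)` gives the stated closed form.
-/

open Real

noncomputable def coth (x : ℝ) : ℝ := Real.cosh x / Real.sinh x

section

open Complex Asymptotics Filter

local notation "ℂ_ℤ" => integerComplement

lemma Complex.im_inv_eq_neg_im_mul_norm_inv_sq (w : ℂ) :
    w⁻¹.im = -w.im * ‖w⁻¹‖ ^ 2 := by
  rw [inv_im, norm_inv, inv_pow, ← normSq_eq_norm_sq, div_eq_mul_inv]

lemma summable_im_inv_add_intCast (z : ℂ) : Summable fun n : ℤ ↦ ((z + n)⁻¹).im := by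
  have hO : (fun n : ℤ ↦ ‖(z + n)⁻¹‖ ^ 2) =O[cofinite] fun n ↦ 1 / (n : ℝ) ^ 2 := by
    simpa using (EisensteinSeries.linear_inv_isBigO_right 1 z).norm_left.pow 2
  have hsum := summable_of_isBigO (summable_one_div_int_pow.mpr one_lt_two) hO
  simpa only [im_inv_eq_neg_im_mul_norm_inv_sq, add_im, intCast_im, add_zero] using
    hsum.mul_left (-z.im)

lemma hasSum_im_inv_add_intCast {z : ℂ} (hz : z ∈ ℂ_ℤ) :
    HasSum (fun n : ℤ ↦ ((z + n)⁻¹).im) (π * cot (π * z)).im := by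
  set g : ℤ → ℝ := fun n ↦ ((z + n)⁻¹).im
  have hpos : Summable fun n : ℕ ↦ g (n + 1) :=
    (summable_im_inv_add_intCast z).comp_injective fun m n h ↦ by simpa using h
  have hneg : Summable fun n : ℕ ↦ g (-(n + 1)) :=
    (summable_im_inv_add_intCast z).comp_injective fun m n h ↦ by simpa using h
  have hpair :
      HasSum (fun n : ℕ ↦ g (n + 1) + g (-(n + 1))) (π * cot (π * z) - 1 / z).im := by
    rw [cot_series_rep' hz]
    convert hasSum_im (summable_cotTerm hz).hasSum using 2 with n
    simp only [g, cotTerm, add_im, one_div]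
    push_cast
    ring_nf
  have hsplit := (hpos.hasSum.add hneg.hasSum).unique hpair
  convert hpos.hasSum.of_add_one_of_neg_add_one hneg.hasSum using 1
  rw [add_right_comm, hsplit]
  simp [g]

lemma Complex.cot_add_mul_I_im (a b : ℝ) :
    (cot (a + b * I)).im = -(Real.sinh b * Real.cosh b) / (Real.sin a ^ 2 + Real.sinh b ^ 2) := by
  rw [Complex.cot_eq_cos_div_sin, cos_add_mul_I, sin_add_mul_I, div_im]
  simp only [← ofReal_sin, ← ofReal_cos, ← ofReal_sinh, ← ofReal_cosh, normSq_apply, sub_re,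
    sub_im, add_re, add_im, mul_re, mul_im, ofReal_re, ofReal_im, I_re, I_im, mul_zero, mul_one,
    zero_mul, sub_zero, zero_add, add_zero, zero_sub, ← sub_div]
  have hnormSq : Real.sin a * Real.cosh b * (Real.sin a * Real.cosh b) +
      Real.cos a * Real.sinh b * (Real.cos a * Real.sinh b) = Real.sin a ^ 2 + Real.sinh b ^ 2 := by
    linear_combination Real.sin a ^ 2 * Real.cosh_sq b + Real.sinh b ^ 2 * Real.sin_sq_add_cos_sq a
  rw [hnormSq]
  congr 1
  linear_combination -(Real.sinh b * Real.cosh b) * Real.sin_sq_add_cos_sq a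

lemma hasSum_div_add_sq_add_sq (x : ℝ) {y : ℝ} (hy : y ≠ 0) :
    HasSum (fun n : ℤ ↦ y / ((x + n) ^ 2 + y ^ 2))
      (π * (Real.sinh (π * y) * Real.cosh (π * y)) /
        (Real.sin (π * x) ^ 2 + Real.sinh (π * y) ^ 2)) := by
  have hz : (x + y * I : ℂ) ∈ ℂ_ℤ := fun ⟨n, hn⟩ ↦ hy (by simpa using congrArg im hn.symm)
  have hval : (π * cot (π * (x + y * I))).im = -(π * (Real.sinh (π * y) * Real.cosh (π * y)) /
      (Real.sin (π * x) ^ 2 + Real.sinh (π * y) ^ 2)) := by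
    rw [mul_add, ← mul_assoc, ← ofReal_mul, ← ofReal_mul, im_ofReal_mul, cot_add_mul_I_im]
    ring
  have hsum := (hasSum_im_inv_add_intCast hz).neg
  rw [hval, neg_neg] at hsum
  exact hsum.congr_fun fun n ↦ by simp [normSq_apply, neg_div, sq]

lemma coth_div_one_add_sq_mul_coth_sq_sub_one {c : ℝ} (hc : c ≠ 0) (s : ℝ) :
    coth c / (1 + s ^ 2 * (coth c ^ 2 - 1)) =
      Real.sinh c * Real.cosh c / (s ^ 2 + Real.sinh c ^ 2) := by
  have hsinh : Real.sinh c ≠ 0 := Real.sinh_ne_zero.mpr hc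
  have hcoth : coth c ^ 2 - 1 = (Real.sinh c ^ 2)⁻¹ := by
    rw [coth, div_pow, Real.cosh_sq]
    field_simp
    ring
  rw [hcoth, coth]
  field_simp
  ring

end

/-- For every `θ > 0`, `h > 0` and `ω ∈ ℝ`, the series `∑_{k ∈ ℤ} θ/((ω + k/h)² + θ²)`
converges and equals `π h coth(π θ h) / (1 + sin²(π h ω) (coth²(π θ h) − 1))`. -/
theorem periodized_matern_half_spectral_density (θ h ω : ℝ) (hθ : 0 < θ) (hh : 0 < h) :
    HasSum (fun k : ℤ => θ / ((ω + (k : ℝ) / h) ^ 2 + θ ^ 2))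
      (π * h * coth (π * θ * h) /
        (1 + Real.sin (π * h * ω) ^ 2 * (coth (π * θ * h) ^ 2 - 1))) := by
  have hterm (k : ℤ) :
      θ / ((ω + k / h) ^ 2 + θ ^ 2) = h * (h * θ / ((h * ω + k) ^ 2 + (h * θ) ^ 2)) := by
    field_simp
  have hval : π * h * coth (π * θ * h) /
        (1 + Real.sin (π * h * ω) ^ 2 * (coth (π * θ * h) ^ 2 - 1)) =
      h * (π * (Real.sinh (π * (h * θ)) * Real.cosh (π * (h * θ))) /
        (Real.sin (π * (h * ω)) ^ 2 + Real.sinh (π * (h * θ)) ^ 2)) := by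
    rw [mul_div_assoc, coth_div_one_add_sq_mul_coth_sq_sub_one (by positivity)]
    ring_nf
  rw [hval]
  exact ((hasSum_div_add_sq_add_sq (h * ω) (mul_pos hh hθ).ne').mul_left h).congr_fun hterm
end

section
/- For all θ > 0, θ' > 0 with θ ≠ θ', and all h > 0, the integral over ℝ of (θ/(θ² + ω²)) · (θ'/(θ'² + ω²)) · sin²(π ω h) dω converges and equals (π/(2(θ + θ'))) · (1 − (θ·exp(−2π h θ') − θ'·exp(−2π h θ))/(θ − θ')). -/
/-!
Partial fractions split `θ/(θ² + ω²) · θ'/(θ'² + ω²)` into a combination of the Cauchy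
kernels `a/(a² + ω²)`, and `sin² x = (1 - cos 2x)/2` reduces each piece to the cosine
transform `∫ cos(tω) · a/(a² + ω²) dω = π e^{-a|t|}`. That transform comes from Fourier
inversion applied to `e^{-a|x|}`, whose Fourier transform `2a/(a² + (2πξ)²)` is computed by
splitting the integral at `0`.
-/

open Real MeasureTheory Set Filter FourierTransform

lemma integrable_exp_neg_mul_abs {a : ℝ} (ha : 0 < a) :
    Integrable fun x : ℝ => rexp (-(a * |x|)) := by
  rw [← integrableOn_univ, ← Iic_union_Ioi (a := (0 : ℝ))]
  refine IntegrableOn.union ?_ ?_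
  · refine (integrableOn_exp_mul_Iic ha 0).congr_fun (fun x hx => ?_) measurableSet_Iic
    rw [abs_of_nonpos hx, mul_neg, neg_neg]
  · refine (integrableOn_exp_mul_Ioi (neg_lt_zero.2 ha) 0).congr_fun (fun x hx => ?_)
      measurableSet_Ioi
    simp only [abs_of_pos (show 0 < x from hx), neg_mul]

lemma integrable_div_sq_add_sq {a : ℝ} (ha : 0 < a) :
    Integrable fun ω : ℝ => a / (a ^ 2 + ω ^ 2) := by
  refine ((integrable_inv_one_add_sq.comp_div ha.ne').const_mul a⁻¹).congr
    (Eventually.of_forall fun ω => ?_)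
  field_simp

lemma fourier_exp_neg_mul_abs {a : ℝ} (ha : 0 < a) (ξ : ℝ) :
    𝓕 (fun x : ℝ => (rexp (-(a * |x|)) : ℂ)) ξ =
      ((2 * a / (a ^ 2 + (2 * π * ξ) ^ 2) : ℝ) : ℂ) := by
  set b : ℝ := 2 * π * ξ
  have hre_pos : 0 < ((a : ℂ) - b * Complex.I).re := by simpa using ha
  have hre_neg : (-((a : ℂ) + b * Complex.I)).re < 0 := by simpa using ha
  have hIic : EqOn
      (fun v : ℝ => Complex.exp (↑(-2 * π * v * ξ) * Complex.I) • (rexp (-(a * |v|)) : ℂ))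
      (fun v : ℝ => Complex.exp (((a : ℂ) - b * Complex.I) * v)) (Iic 0) := by
    intro v hv
    simp only [smul_eq_mul, abs_of_nonpos (show v ≤ 0 from hv), Complex.ofReal_exp,
      ← Complex.exp_add]
    congr 1
    simp only [b]
    push_cast
    ring
  have hIoi : EqOn
      (fun v : ℝ => Complex.exp (↑(-2 * π * v * ξ) * Complex.I) • (rexp (-(a * |v|)) : ℂ))
      (fun v : ℝ => Complex.exp (-((a : ℂ) + b * Complex.I) * v)) (Ioi 0) := by
    intro v hv
    simp only [smul_eq_mul, abs_of_pos (show 0 < v from hv), Complex.ofReal_exp,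
      ← Complex.exp_add]
    congr 1
    simp only [b]
    push_cast
    ring
  rw [Real.fourier_real_eq_integral_exp_smul, ← intervalIntegral.integral_Iic_add_Ioi
      ((integrableOn_exp_mul_complex_Iic hre_pos 0).congr_fun hIic.symm measurableSet_Iic)
      ((integrableOn_exp_mul_complex_Ioi hre_neg 0).congr_fun hIoi.symm measurableSet_Ioi),
    setIntegral_congr_fun measurableSet_Iic hIic, setIntegral_congr_fun measurableSet_Ioi hIoi,
    integral_exp_mul_complex_Iic hre_pos, integral_exp_mul_complex_Ioi hre_neg]
  have h₁ : (a : ℂ) - b * Complex.I ≠ 0 := fun h => by simp [h] at hre_pos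
  have h₂ : (a : ℂ) + b * Complex.I ≠ 0 := fun h => by simp [h] at hre_neg
  have h₃ : (a : ℂ) ^ 2 + b ^ 2 ≠ 0 := by exact_mod_cast (by positivity : a ^ 2 + b ^ 2 ≠ 0)
  push_cast
  simp only [mul_zero, Complex.exp_zero]
  field_simp
  linear_combination (2 * (a : ℂ) * b ^ 2) * Complex.I_sq

lemma integrable_fourier_exp_neg_mul_abs {a : ℝ} (ha : 0 < a) :
    Integrable fun ξ : ℝ => 2 * a / (a ^ 2 + (2 * π * ξ) ^ 2) := by
  have h2π : 2 * π ≠ 0 := by positivity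
  refine (((integrable_div_sq_add_sq ha).comp_mul_left' h2π).const_mul 2).congr
    (Eventually.of_forall fun ξ => ?_)
  simp only [mul_div_assoc]

lemma integral_cos_mul_fourier_exp_neg_mul_abs {a : ℝ} (ha : 0 < a) (t : ℝ) :
    ∫ ξ : ℝ, cos (2 * π * (t * ξ)) * (2 * a / (a ^ 2 + (2 * π * ξ) ^ 2)) =
      rexp (-(a * |t|)) := by
  set f : ℝ → ℂ := fun x => (rexp (-(a * |x|)) : ℂ)
  have hf : Continuous f := by fun_prop
  have hFf : 𝓕 f = fun ξ => ((2 * a / (a ^ 2 + (2 * π * ξ) ^ 2) : ℝ) : ℂ) :=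
    funext (fourier_exp_neg_mul_abs ha)
  have hFf_int : Integrable (𝓕 f) := hFf ▸ (integrable_fourier_exp_neg_mul_abs ha).ofReal
  have hinv :=
    congrFun (hf.fourierInv_fourier_eq (integrable_exp_neg_mul_abs ha).ofReal hFf_int) t
  rw [Real.fourierInv_eq', hFf] at hinv
  have hint : Integrable fun ξ : ℝ => Complex.exp (↑(2 * π * inner ℝ ξ t) * Complex.I) •
      ((2 * a / (a ^ 2 + (2 * π * ξ) ^ 2) : ℝ) : ℂ) :=
    (integrable_fourier_exp_neg_mul_abs ha).ofReal.bdd_mul (c := 1) (by fun_prop)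
      (Eventually.of_forall fun ξ => (Complex.norm_exp_ofReal_mul_I _).le)
  have := congrArg Complex.re hinv
  rw [← Complex.reCLM_apply, ← Complex.reCLM.integral_comp_comm hint] at this
  simpa only [smul_eq_mul, Complex.reCLM_apply, Complex.re_mul_ofReal,
    Complex.exp_ofReal_mul_I_re, RCLike.inner_apply, conj_trivial, Complex.ofReal_re, f] using this

lemma integral_cos_mul_div_sq_add_sq {a : ℝ} (ha : 0 < a) (t : ℝ) :
    ∫ ω : ℝ, cos (t * ω) * (a / (a ^ 2 + ω ^ 2)) = π * rexp (-(a * |t|)) := by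
  have hsubst :=
    Measure.integral_comp_mul_left (fun ω => cos (t * ω) * (a / (a ^ 2 + ω ^ 2))) (2 * π)
  have hfourier : ∫ ξ : ℝ, cos (2 * π * (t * ξ)) * (2 * a / (a ^ 2 + (2 * π * ξ) ^ 2)) =
      2 * ∫ ξ : ℝ, cos (t * (2 * π * ξ)) * (a / (a ^ 2 + (2 * π * ξ) ^ 2)) := by
    rw [← integral_const_mul]
    congr 1 with ξ
    ring_nf
  rw [integral_cos_mul_fourier_exp_neg_mul_abs ha, hsubst, smul_eq_mul,
    abs_of_pos (by positivity : 0 < (2 * π)⁻¹)] at hfourier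
  generalize ∫ ω : ℝ, cos (t * ω) * (a / (a ^ 2 + ω ^ 2)) = I at hfourier ⊢
  rw [hfourier]
  field_simp

lemma integrable_cos_mul_div_sq_add_sq {a : ℝ} (ha : 0 < a) (t : ℝ) :
    Integrable fun ω : ℝ => cos (t * ω) * (a / (a ^ 2 + ω ^ 2)) :=
  (integrable_div_sq_add_sq ha).bdd_mul (c := 1) (by fun_prop)
    (Eventually.of_forall fun ω => by simpa using abs_cos_le_one (t * ω))

lemma div_sq_add_sq_mul_sin_sq_eq (a h ω : ℝ) :
    a / (a ^ 2 + ω ^ 2) * sin (π * ω * h) ^ 2 =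
      1 / 2 * (cos (0 * ω) * (a / (a ^ 2 + ω ^ 2))) -
        1 / 2 * (cos (2 * π * h * ω) * (a / (a ^ 2 + ω ^ 2))) := by
  rw [sin_sq_eq_half_sub, zero_mul, cos_zero, show 2 * π * h * ω = 2 * (π * ω * h) by ring]
  ring

lemma integrable_div_sq_add_sq_mul_sin_sq {a : ℝ} (ha : 0 < a) (h : ℝ) :
    Integrable fun ω : ℝ => a / (a ^ 2 + ω ^ 2) * sin (π * ω * h) ^ 2 := by
  simp_rw [div_sq_add_sq_mul_sin_sq_eq]
  exact ((integrable_cos_mul_div_sq_add_sq ha 0).const_mul _).sub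
    ((integrable_cos_mul_div_sq_add_sq ha _).const_mul _)

lemma integral_div_sq_add_sq_mul_sin_sq {a : ℝ} (ha : 0 < a) (h : ℝ) :
    ∫ ω : ℝ, a / (a ^ 2 + ω ^ 2) * sin (π * ω * h) ^ 2 =
      π / 2 * (1 - rexp (-(2 * π * |h| * a))) := by
  simp_rw [div_sq_add_sq_mul_sin_sq_eq]
  rw [integral_sub ((integrable_cos_mul_div_sq_add_sq ha 0).const_mul _)
      ((integrable_cos_mul_div_sq_add_sq ha _).const_mul _),
    integral_const_mul, integral_const_mul, integral_cos_mul_div_sq_add_sq ha,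
    integral_cos_mul_div_sq_add_sq ha, abs_zero, mul_zero, neg_zero, exp_zero, abs_mul,
    abs_of_pos (by positivity : 0 < 2 * π)]
  ring_nf

lemma div_sq_add_sq_mul_div_sq_add_sq_eq_sub {a b : ℝ} (hab : a ^ 2 ≠ b ^ 2) (ω : ℝ) :
    a / (a ^ 2 + ω ^ 2) * (b / (b ^ 2 + ω ^ 2)) =
      b / (b ^ 2 - a ^ 2) * (a / (a ^ 2 + ω ^ 2)) -
        a / (b ^ 2 - a ^ 2) * (b / (b ^ 2 + ω ^ 2)) := by
  have hba : b ^ 2 - a ^ 2 ≠ 0 := sub_ne_zero.2 hab.symm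
  rcases eq_or_ne (a ^ 2 + ω ^ 2) 0 with ha | ha
  · simp [pow_eq_zero_iff two_ne_zero |>.1 (by nlinarith [sq_nonneg ω] : a ^ 2 = 0)]
  rcases eq_or_ne (b ^ 2 + ω ^ 2) 0 with hb | hb
  · simp [pow_eq_zero_iff two_ne_zero |>.1 (by nlinarith [sq_nonneg ω] : b ^ 2 = 0)]
  field_simp
  ring

/-- For all `θ > 0`, `θ' > 0` with `θ ≠ θ'`, and all `h > 0`, the integral over `ℝ` of
`(θ/(θ² + ω²)) · (θ'/(θ'² + ω²)) · sin²(π ω h) dω` converges and equals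
`(π/(2(θ + θ'))) · (1 − (θ·exp(−2πhθ') − θ'·exp(−2πhθ))/(θ − θ'))`. -/
theorem integral_matern_half_product_sin_sq (θ θ' h : ℝ) (hθ : 0 < θ) (hθ' : 0 < θ')
    (hne : θ ≠ θ') (hh : 0 < h) :
    Integrable (fun ω : ℝ =>
      θ / (θ ^ 2 + ω ^ 2) * (θ' / (θ' ^ 2 + ω ^ 2)) * Real.sin (π * ω * h) ^ 2) ∧
    ∫ ω : ℝ, θ / (θ ^ 2 + ω ^ 2) * (θ' / (θ' ^ 2 + ω ^ 2)) * Real.sin (π * ω * h) ^ 2 =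
      π / (2 * (θ + θ')) *
        (1 - (θ * Real.exp (-(2 * π * h * θ')) - θ' * Real.exp (-(2 * π * h * θ)))
          / (θ - θ')) := by
  have hsq : θ ^ 2 ≠ θ' ^ 2 := fun hsq => hne (by nlinarith)
  have hsplit :
      (fun ω : ℝ => θ / (θ ^ 2 + ω ^ 2) * (θ' / (θ' ^ 2 + ω ^ 2)) * sin (π * ω * h) ^ 2) =
      fun ω =>
        θ' / (θ' ^ 2 - θ ^ 2) * (θ / (θ ^ 2 + ω ^ 2) * sin (π * ω * h) ^ 2) -
          θ / (θ' ^ 2 - θ ^ 2) * (θ' / (θ' ^ 2 + ω ^ 2) * sin (π * ω * h) ^ 2) := by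
    funext ω
    rw [div_sq_add_sq_mul_div_sq_add_sq_eq_sub hsq]
    ring
  have hint := integrable_div_sq_add_sq_mul_sin_sq hθ h
  have hint' := integrable_div_sq_add_sq_mul_sin_sq hθ' h
  refine ⟨hsplit ▸ (hint.const_mul _).sub (hint'.const_mul _), ?_⟩
  rw [hsplit, integral_sub (hint.const_mul _) (hint'.const_mul _), integral_const_mul,
    integral_const_mul, integral_div_sq_add_sq_mul_sin_sq hθ,
    integral_div_sq_add_sq_mul_sin_sq hθ', abs_of_pos hh]
  have hsum : θ + θ' ≠ 0 := by positivity
  have hdiff : θ - θ' ≠ 0 := sub_ne_zero.2 hne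
  field_simp
  ring
end

section
/- For all θ > 0 and h > 0, the integral over ℝ of θ² · sin²(π ω h) / (θ² + ω²)² dω converges and equals (π/(4θ)) · (1 − exp(−2π h θ) · (1 + 2π h θ)). -/
open Real MeasureTheory Filter Set
open scoped Complex FourierTransform Topology

/-!
The Matérn-3/2 covariance `k(t) = (1 + θ|t|) e^{-θ|t|}` has Fourier transform
`4θ³ / (θ² + (2πu)²)²`: splitting `ℝ` at `0`, this is the sum of the Laplace transforms
`∫₀^∞ (1 + θt) e^{-ct} dt = 1/c + θ/c²` at `c = θ ± 2πiu`. Fourier inversion then gives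
`∫ cos(vω) / (θ² + ω²)² dω = π/(2θ³) · k(v)`, and `sin²(πωh) = (1 - cos(2πhω))/2` reduces the
integral to the values `k(0) = 1` and `k(2πh)`.
-/

section LaplaceTransform

variable {c : ℂ}

theorem integral_cexp_neg_mul_Ioi (hc : 0 < c.re) :
    ∫ t in Ioi (0 : ℝ), cexp (-(c * t)) = 1 / c := by
  have := integral_exp_mul_complex_Ioi (a := -c) (by simpa using hc) 0
  simp only [neg_mul, Complex.ofReal_zero, mul_zero, Complex.exp_zero] at this
  rw [this]
  field_simp

theorem integrableOn_cexp_neg_mul_Ioi (hc : 0 < c.re) :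
    IntegrableOn (fun t : ℝ => cexp (-(c * t))) (Ioi 0) := by
  simpa using integrableOn_exp_mul_complex_Ioi (a := -c) (by simpa using hc) 0

theorem integrableOn_mul_cexp_neg_mul_Ioi (hc : 0 < c.re) :
    IntegrableOn (fun t : ℝ => t * cexp (-(c * t))) (Ioi 0) := by
  have hreal : IntegrableOn (fun t : ℝ => t * rexp (-c.re * t)) (Ioi 0) := by
    simpa using integrableOn_rpow_mul_exp_neg_mul_rpow (s := 1) (p := 1) (by norm_num)
      (by norm_num) hc
  refine Integrable.congr' hreal (by fun_prop) ?_
  filter_upwards [ae_restrict_mem measurableSet_Ioi] with t (ht : 0 < t)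
  simp [Complex.norm_exp, abs_of_pos ht]

theorem tendsto_mul_cexp_neg_mul_atTop (hc : 0 < c.re) :
    Tendsto (fun t : ℝ => t * cexp (-(c * t))) atTop (𝓝 0) := by
  rw [tendsto_zero_iff_norm_tendsto_zero]
  refine (tendsto_rpow_mul_exp_neg_mul_atTop_nhds_zero 1 c.re hc).congr' ?_
  filter_upwards [eventually_gt_atTop 0] with t ht
  simp [Complex.norm_exp, abs_of_pos ht]

theorem integral_mul_cexp_neg_mul_Ioi (hc : 0 < c.re) :
    ∫ t in Ioi (0 : ℝ), t * cexp (-(c * t)) = 1 / c ^ 2 := by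
  have hc0 : c ≠ 0 := fun h => by simp [h] at hc
  have hderiv : ∀ t ∈ Ici (0 : ℝ),
      HasDerivAt (fun t : ℝ => -((t / c + 1 / c ^ 2) * cexp (-(c * t))))
        (t * cexp (-(c * t))) t := by
    intro t _
    have hexp : HasDerivAt (fun t : ℝ => cexp (-(c * t))) (-c * cexp (-(c * t))) t := by
      simpa [mul_comm] using ((((hasDerivAt_id (t : ℂ)).const_mul c).neg).cexp).comp_ofReal
    have hlin : HasDerivAt (fun t : ℝ => (t : ℂ) / c + 1 / c ^ 2) (1 / c) t := by
      simpa using ((hasDerivAt_id t).ofReal_comp.div_const c).add_const (1 / c ^ 2)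
    refine (hlin.mul hexp).neg.congr_deriv ?_
    field_simp
    ring
  have hlim : Tendsto (fun t : ℝ => -((t / c + 1 / c ^ 2) * cexp (-(c * t)))) atTop (𝓝 0) := by
    have hexp : Tendsto (fun t : ℝ => cexp (-(c * t))) atTop (𝓝 0) := by
      rw [Complex.tendsto_exp_nhds_zero_iff]
      simpa using tendsto_id.const_mul_atTop hc
    have := (((tendsto_mul_cexp_neg_mul_atTop hc).div_const c).add
      (hexp.const_mul (1 / c ^ 2))).neg
    rw [zero_div, mul_zero, add_zero, neg_zero] at this
    exact this.congr fun t => by ring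
  rw [integral_Ioi_of_hasDerivAt_of_tendsto' hderiv (integrableOn_mul_cexp_neg_mul_Ioi hc) hlim]
  simp

theorem integrableOn_one_add_mul_mul_cexp_neg_mul_Ioi (hc : 0 < c.re) (a : ℂ) :
    IntegrableOn (fun t : ℝ => (1 + a * t) * cexp (-(c * t))) (Ioi 0) := by
  refine ((integrableOn_cexp_neg_mul_Ioi hc).add
    ((integrableOn_mul_cexp_neg_mul_Ioi hc).const_mul a)).congr_fun (fun t _ => ?_)
    measurableSet_Ioi
  simp only [Pi.add_apply]
  ring

theorem integral_one_add_mul_mul_cexp_neg_mul_Ioi (hc : 0 < c.re) (a : ℂ) :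
    ∫ t in Ioi (0 : ℝ), (1 + a * t) * cexp (-(c * t)) = 1 / c + a / c ^ 2 := by
  simp only [add_mul, one_mul, mul_assoc]
  rw [integral_add (integrableOn_cexp_neg_mul_Ioi hc)
      ((integrableOn_mul_cexp_neg_mul_Ioi hc).const_mul a),
    integral_const_mul, integral_cexp_neg_mul_Ioi hc, integral_mul_cexp_neg_mul_Ioi hc,
    mul_one_div]

end LaplaceTransform

section EvenFunctions

variable {E : Type*} [NormedAddCommGroup E] {f : ℝ → E}

theorem integrable_comp_abs (hf : IntegrableOn f (Ioi 0)) : Integrable fun x => f |x| := by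
  have hIoi : IntegrableOn (fun x => f |x|) (Ioi 0) :=
    hf.congr_fun (fun x hx => by rw [abs_of_pos hx]) measurableSet_Ioi
  have hIic : IntegrableOn (fun x => f |x|) (Iic 0) := by
    rw [integrableOn_Iic_iff_integrableOn_Iio]
    rw [← neg_zero] at hIoi
    simpa only [abs_neg] using hIoi.comp_neg_Iio
  rw [← integrableOn_univ, ← Iic_union_Ioi (a := (0 : ℝ))]
  exact hIic.union hIoi

theorem integral_eq_integral_Ioi_add_comp_neg [NormedSpace ℝ E] (hf : Integrable f) :
    ∫ x, f x = ∫ x in Ioi 0, (f x + f (-x)) := by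
  rw [integral_add hf.integrableOn hf.comp_neg.integrableOn, integral_comp_neg_Ioi, neg_zero,
    add_comm, intervalIntegral.integral_Iic_add_Ioi hf.integrableOn hf.integrableOn]

end EvenFunctions

noncomputable def maternThreeHalves (θ t : ℝ) : ℝ := (1 + θ * |t|) * rexp (-(θ * |t|))

theorem maternThreeHalves_zero (θ : ℝ) : maternThreeHalves θ 0 = 1 := by
  simp [maternThreeHalves]

theorem continuous_maternThreeHalves (θ : ℝ) : Continuous (maternThreeHalves θ) := by
  unfold maternThreeHalves; fun_prop

theorem integrable_maternThreeHalves {θ : ℝ} (hθ : 0 < θ) : Integrable (maternThreeHalves θ) := by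
  have hIoi : IntegrableOn (fun t : ℝ => (1 + θ * t) * rexp (-(θ * t))) (Ioi 0) := by
    refine IntegrableOn.congr_fun
      (integrableOn_one_add_mul_mul_cexp_neg_mul_Ioi (c := θ) (by simpa using hθ) θ).norm
      (fun t ht => ?_) measurableSet_Ioi
    have hpos : 0 ≤ 1 + θ * t := by nlinarith [mem_Ioi.mp ht]
    rw [norm_mul, Complex.norm_exp]
    norm_cast
    simp [abs_of_nonneg hpos]
  exact integrable_comp_abs hIoi

theorem fourier_maternThreeHalves {θ : ℝ} (hθ : 0 < θ) :
    𝓕 (fun t => (maternThreeHalves θ t : ℂ)) =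
      fun u => ((4 * θ ^ 3 / (θ ^ 2 + (2 * π * u) ^ 2) ^ 2 : ℝ) : ℂ) := by
  ext u
  set b := 2 * π * u
  have hre₁ : 0 < ((θ : ℂ) + b * Complex.I).re := by simpa using hθ
  have hre₂ : 0 < ((θ : ℂ) - b * Complex.I).re := by simpa using hθ
  have hpair : ∀ t : ℝ, 0 < t →
      cexp (↑(-2 * π * t * u) * Complex.I) • (maternThreeHalves θ t : ℂ) +
        cexp (↑(-2 * π * -t * u) * Complex.I) • (maternThreeHalves θ (-t) : ℂ) =
      (1 + θ * t) * cexp (-((θ + b * Complex.I) * t)) +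
        (1 + θ * t) * cexp (-((θ - b * Complex.I) * t)) := by
    intro t ht
    simp only [maternThreeHalves, abs_neg, abs_of_pos ht, smul_eq_mul, Complex.ofReal_mul,
      Complex.ofReal_add, Complex.ofReal_exp]
    rw [mul_left_comm, ← Complex.exp_add, mul_left_comm (cexp _), ← Complex.exp_add]
    congr 3 <;> push_cast [b] <;> ring
  have hint : Integrable fun t : ℝ =>
      cexp (↑(-2 * π * t * u) * Complex.I) • (maternThreeHalves θ t : ℂ) :=
    (integrable_maternThreeHalves hθ).ofReal.bdd_mul (c := 1) (by fun_prop)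
      (ae_of_all _ fun t => (Complex.norm_exp_ofReal_mul_I _).le)
  rw [Real.fourier_real_eq_integral_exp_smul, integral_eq_integral_Ioi_add_comp_neg hint,
    setIntegral_congr_fun measurableSet_Ioi hpair,
    integral_add (integrableOn_one_add_mul_mul_cexp_neg_mul_Ioi hre₁ θ)
      (integrableOn_one_add_mul_mul_cexp_neg_mul_Ioi hre₂ θ),
    integral_one_add_mul_mul_cexp_neg_mul_Ioi hre₁, integral_one_add_mul_mul_cexp_neg_mul_Ioi hre₂]
  have hc₁ : (θ : ℂ) + b * Complex.I ≠ 0 := fun h => by simp [h] at hre₁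
  have hc₂ : (θ : ℂ) - b * Complex.I ≠ 0 := fun h => by simp [h] at hre₂
  have hprod : (θ : ℂ) ^ 2 + (b : ℂ) ^ 2 = ((θ : ℂ) + b * Complex.I) * (θ - b * Complex.I) := by
    ring_nf
    rw [Complex.I_sq]
    ring
  push_cast
  rw [hprod]
  field_simp
  ring

theorem integrable_inv_sq_add_sq_sq {θ : ℝ} (hθ : θ ≠ 0) :
    Integrable fun ω : ℝ => ((θ ^ 2 + ω ^ 2) ^ 2)⁻¹ := by
  refine ((integrable_inv_one_add_sq.comp_div hθ).const_mul (θ ^ 4)⁻¹).mono' (by fun_prop)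
    (ae_of_all _ fun ω => ?_)
  have hθ2 : 0 < θ ^ 2 := by positivity
  have hbound : (θ ^ 4)⁻¹ * (1 + (ω / θ) ^ 2)⁻¹ = (θ ^ 2 * (θ ^ 2 + ω ^ 2))⁻¹ := by
    field_simp
  rw [norm_inv, Real.norm_of_nonneg (by positivity), hbound]
  exact inv_anti₀ (by positivity) (by nlinarith [sq_nonneg ω])

theorem integrable_cos_mul_div_sq_add_sq_sq {θ : ℝ} (hθ : θ ≠ 0) (v : ℝ) :
    Integrable fun ω : ℝ => Real.cos (v * ω) / (θ ^ 2 + ω ^ 2) ^ 2 := by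
  simp only [div_eq_mul_inv]
  exact (integrable_inv_sq_add_sq_sq hθ).bdd_mul (c := 1) (by fun_prop)
    (ae_of_all _ fun ω => by simpa using Real.abs_cos_le_one _)

theorem integral_cos_mul_div_sq_add_sq_sq {θ : ℝ} (hθ : 0 < θ) (v : ℝ) :
    ∫ ω : ℝ, Real.cos (v * ω) / (θ ^ 2 + ω ^ 2) ^ 2 = π / (2 * θ ^ 3) * maternThreeHalves θ v := by
  have hspec : Integrable fun u : ℝ => ((4 * θ ^ 3 / (θ ^ 2 + (2 * π * u) ^ 2) ^ 2 : ℝ) : ℂ) := by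
    simp only [div_eq_mul_inv]
    exact ((integrable_inv_sq_add_sq_sq hθ.ne').comp_mul_left' (by positivity)
      |>.const_mul _).ofReal
  have hK : Integrable fun t => (maternThreeHalves θ t : ℂ) :=
    (integrable_maternThreeHalves hθ).ofReal
  have hinv := hK.fourierInv_fourier_eq (fourier_maternThreeHalves hθ ▸ hspec)
    (v := v) (by have := continuous_maternThreeHalves θ; fun_prop)
  rw [Real.fourierInv_eq_fourier_neg, fourier_maternThreeHalves hθ,
    Real.fourier_real_eq_integral_exp_smul] at hinv
  have hF : Integrable fun u : ℝ => cexp (↑(-2 * π * u * -v) * Complex.I) •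
      ((4 * θ ^ 3 / (θ ^ 2 + (2 * π * u) ^ 2) ^ 2 : ℝ) : ℂ) :=
    hspec.bdd_mul (c := 1) (by fun_prop)
      (ae_of_all _ fun u => (Complex.norm_exp_ofReal_mul_I _).le)
  have hre := congrArg Complex.re hinv
  rw [← RCLike.re_to_complex, ← integral_re hF] at hre
  simp only [RCLike.re_to_complex, smul_eq_mul, Complex.re_mul_ofReal,
    Complex.exp_ofReal_mul_I_re, Complex.ofReal_re] at hre
  have hscale := Measure.integral_comp_mul_left (fun ω => Real.cos (v * ω) / (θ ^ 2 + ω ^ 2) ^ 2)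
    (2 * π)
  have hpoint : ∀ u : ℝ, Real.cos (v * (2 * π * u)) / (θ ^ 2 + (2 * π * u) ^ 2) ^ 2 =
      (4 * θ ^ 3)⁻¹ *
        (Real.cos (-2 * π * u * -v) * (4 * θ ^ 3 / (θ ^ 2 + (2 * π * u) ^ 2) ^ 2)) := by
    intro u
    rw [show -2 * π * u * -v = v * (2 * π * u) by ring]
    field_simp
  simp_rw [hpoint] at hscale
  rw [integral_const_mul, hre, smul_eq_mul, abs_of_pos (by positivity)] at hscale
  field_simp at hscale ⊢
  linarith

/-- For all `θ > 0` and `h > 0`, the integral over `ℝ` of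
`θ² sin²(π ω h) / (θ² + ω²)² dω` converges and equals
`(π/(4θ)) · (1 − exp(−2πhθ)(1 + 2πhθ))`. -/
theorem integral_matern_half_sq_sin_sq (θ h : ℝ) (hθ : 0 < θ) (hh : 0 < h) :
    Integrable (fun ω : ℝ => θ ^ 2 * Real.sin (π * ω * h) ^ 2 / (θ ^ 2 + ω ^ 2) ^ 2) ∧
    ∫ ω : ℝ, θ ^ 2 * Real.sin (π * ω * h) ^ 2 / (θ ^ 2 + ω ^ 2) ^ 2 =
      π / (4 * θ) * (1 - Real.exp (-(2 * π * h * θ)) * (1 + 2 * π * h * θ)) := by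
  have hsplit : (fun ω : ℝ => θ ^ 2 * Real.sin (π * ω * h) ^ 2 / (θ ^ 2 + ω ^ 2) ^ 2) =
      fun ω => θ ^ 2 / 2 * (Real.cos (0 * ω) / (θ ^ 2 + ω ^ 2) ^ 2 -
        Real.cos (2 * π * h * ω) / (θ ^ 2 + ω ^ 2) ^ 2) := by
    ext ω
    rw [sin_sq_eq_half_sub, zero_mul, Real.cos_zero, show 2 * (π * ω * h) = 2 * π * h * ω by ring]
    ring
  have h₀ := integrable_cos_mul_div_sq_add_sq_sq hθ.ne' 0
  have hₕ := integrable_cos_mul_div_sq_add_sq_sq hθ.ne' (2 * π * h)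
  rw [hsplit]
  refine ⟨(h₀.sub hₕ).const_mul _, ?_⟩
  rw [integral_const_mul, integral_sub h₀ hₕ, integral_cos_mul_div_sq_add_sq_sq hθ,
    integral_cos_mul_div_sq_add_sq_sq hθ, maternThreeHalves_zero, maternThreeHalves,
    abs_of_pos (by positivity)]
  field_simp
  ring
end

section
/- Let h > 0 and let F : ℝ → [0, ∞) be measurable such that S(ω) := ∑_{k ∈ ℤ} F(ω + k/h) is finite and positive for almost every ω, and ∫_ℝ F(ω) dω < ∞. Then for every measurable g : ℝ → ℝ, ∫_ℝ F(ω)·[(1 − g(ω))² + ∑_{k ∈ ℤ, k ≠ 0} g(ω + k/h)²] dω ≥ ∫_ℝ F(ω)·(S(ω) − F(ω))/S(ω) dω, and equality holds when g(ω) = F(ω)/S(ω). -/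
open Real MeasureTheory

lemma tsum_int_split' (f : ℤ → ENNReal) : ∑' k, f k = f 0 + ∑' k : {k : ℤ // k ≠ 0}, f k := by
  rw [ENNReal.tsum_eq_add_tsum_ite 0]
  congr 1
  have hsupp : Function.support (fun x : ℤ => ite (x=0) 0 (f x)) ⊆
      Set.range ((↑) : {k : ℤ // k ≠ 0} → ℤ) := by
    intro x hx
    simp only [Function.mem_support, ne_eq] at hx
    have hx0 : x ≠ 0 := by rintro rfl; simp at hx
    exact ⟨⟨x, hx0⟩, rfl⟩
  have h1 := Function.Injective.tsum_eq (f := fun x : ℤ => ite (x=0) 0 (f x))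
    Subtype.coe_injective hsupp
  have h2 : ∑' k : {k : ℤ // k ≠ 0}, (if (k:ℤ) = 0 then (0:ENNReal) else f ↑k)
      = ∑' k : {k : ℤ // k ≠ 0}, f ↑k := tsum_congr fun k => if_neg k.2
  rw [← h2, h1]
  exact tsum_congr fun b => by by_cases hb : b = 0 <;> simp [hb]

lemma aux_translate' (F : ℝ → ℝ) (G : ℝ → ENNReal) (c : ℝ) :
    ∫⁻ ω : ℝ, ENNReal.ofReal (F ω) * G (ω + c) =
      ∫⁻ ω : ℝ, ENNReal.ofReal (F (ω - c)) * G ω := by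
  calc ∫⁻ ω : ℝ, ENNReal.ofReal (F ω) * G (ω + c)
      = ∫⁻ ω : ℝ, (fun x => ENNReal.ofReal (F (x - c)) * G x) (ω + c) := by
        refine lintegral_congr fun ω => ?_
        simp [add_sub_cancel_right]
    _ = ∫⁻ ω : ℝ, ENNReal.ofReal (F (ω - c)) * G ω :=
        lintegral_add_right_eq_self (fun x => ENNReal.ofReal (F (x - c)) * G x) c

def negNe' : {k : ℤ // k ≠ 0} ≃ {k : ℤ // k ≠ 0} :=
  ⟨fun k => ⟨-k, neg_ne_zero.2 k.2⟩, fun k => ⟨-k, neg_ne_zero.2 k.2⟩,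
    fun k => by simp, fun k => by simp⟩

lemma aux_neg' (f : ℝ → ENNReal) (h ω : ℝ) :
    ∑' k : {k : ℤ // k ≠ 0}, f (ω - ((k : ℤ) : ℝ) / h)
      = ∑' k : {k : ℤ // k ≠ 0}, f (ω + ((k : ℤ) : ℝ) / h) := by
  have he := negNe'.tsum_eq (fun k : {k : ℤ // k ≠ 0} => f (ω + ((k : ℤ) : ℝ) / h))
  rw [← he]
  refine tsum_congr fun k => ?_
  have : ω + ((((negNe' k) : ℤ)) : ℝ) / h = ω - ((k : ℤ) : ℝ) / h := by
    show ω + ((-(k : ℤ) : ℤ) : ℝ) / h = ω - ((k : ℤ) : ℝ) / h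
    push_cast
    ring
  rw [this]

lemma chain' (h : ℝ) (F g : ℝ → ℝ) (hF : Measurable F) (hg : Measurable g) :
    ∫⁻ ω : ℝ, ENNReal.ofReal (F ω) *
        (ENNReal.ofReal ((1 - g ω) ^ 2) +
          ∑' k : {k : ℤ // k ≠ 0}, ENNReal.ofReal (g (ω + ((k : ℤ) : ℝ) / h) ^ 2)) =
    ∫⁻ ω : ℝ, (ENNReal.ofReal (F ω) * ENNReal.ofReal ((1 - g ω) ^ 2) +
        (∑' k : {k : ℤ // k ≠ 0}, ENNReal.ofReal (F (ω + ((k : ℤ) : ℝ) / h))) *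
          ENNReal.ofReal (g ω ^ 2)) := by
  have m1 : Measurable fun ω => ENNReal.ofReal (F ω) * ENNReal.ofReal ((1 - g ω) ^ 2) :=
    (hF.ennreal_ofReal).mul (((measurable_const.sub hg).pow_const 2).ennreal_ofReal)
  have mk : ∀ k : {k : ℤ // k ≠ 0}, Measurable fun ω : ℝ =>
      ENNReal.ofReal (F ω) * ENNReal.ofReal (g (ω + ((k : ℤ) : ℝ) / h) ^ 2) := fun k =>
    (hF.ennreal_ofReal).mul
      (((hg.comp (measurable_add_const _)).pow_const 2).ennreal_ofReal)
  have mk' : ∀ k : {k : ℤ // k ≠ 0}, Measurable fun ω : ℝ =>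
      ENNReal.ofReal (F (ω - ((k : ℤ) : ℝ) / h)) * ENNReal.ofReal (g ω ^ 2) := fun k =>
    ((hF.comp (measurable_id.sub measurable_const)).ennreal_ofReal).mul
      ((hg.pow_const 2).ennreal_ofReal)
  calc ∫⁻ ω : ℝ, ENNReal.ofReal (F ω) *
        (ENNReal.ofReal ((1 - g ω) ^ 2) +
          ∑' k : {k : ℤ // k ≠ 0}, ENNReal.ofReal (g (ω + ((k : ℤ) : ℝ) / h) ^ 2))
      = ∫⁻ ω : ℝ, (ENNReal.ofReal (F ω) * ENNReal.ofReal ((1 - g ω) ^ 2) +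
          ∑' k : {k : ℤ // k ≠ 0},
            ENNReal.ofReal (F ω) * ENNReal.ofReal (g (ω + ((k : ℤ) : ℝ) / h) ^ 2)) := by
        refine lintegral_congr fun ω => ?_
        rw [mul_add, ENNReal.tsum_mul_left]
    _ = (∫⁻ ω : ℝ, ENNReal.ofReal (F ω) * ENNReal.ofReal ((1 - g ω) ^ 2)) +
          ∫⁻ ω : ℝ, ∑' k : {k : ℤ // k ≠ 0},
            ENNReal.ofReal (F ω) * ENNReal.ofReal (g (ω + ((k : ℤ) : ℝ) / h) ^ 2) :=
        lintegral_add_left m1 _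
    _ = (∫⁻ ω : ℝ, ENNReal.ofReal (F ω) * ENNReal.ofReal ((1 - g ω) ^ 2)) +
          ∑' k : {k : ℤ // k ≠ 0}, ∫⁻ ω : ℝ,
            ENNReal.ofReal (F ω) * ENNReal.ofReal (g (ω + ((k : ℤ) : ℝ) / h) ^ 2) := by
        rw [lintegral_tsum fun k => (mk k).aemeasurable]
    _ = (∫⁻ ω : ℝ, ENNReal.ofReal (F ω) * ENNReal.ofReal ((1 - g ω) ^ 2)) +
          ∑' k : {k : ℤ // k ≠ 0}, ∫⁻ ω : ℝ,
            ENNReal.ofReal (F (ω - ((k : ℤ) : ℝ) / h)) * ENNReal.ofReal (g ω ^ 2) := by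
        congr 1
        exact tsum_congr fun k =>
          aux_translate' F (fun x => ENNReal.ofReal (g x ^ 2)) (((k : ℤ) : ℝ) / h)
    _ = (∫⁻ ω : ℝ, ENNReal.ofReal (F ω) * ENNReal.ofReal ((1 - g ω) ^ 2)) +
          ∫⁻ ω : ℝ, ∑' k : {k : ℤ // k ≠ 0},
            ENNReal.ofReal (F (ω - ((k : ℤ) : ℝ) / h)) * ENNReal.ofReal (g ω ^ 2) := by
        rw [lintegral_tsum fun k => (mk' k).aemeasurable]
    _ = ∫⁻ ω : ℝ, (ENNReal.ofReal (F ω) * ENNReal.ofReal ((1 - g ω) ^ 2) +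
          (∑' k : {k : ℤ // k ≠ 0}, ENNReal.ofReal (F (ω + ((k : ℤ) : ℝ) / h))) *
            ENNReal.ofReal (g ω ^ 2)) := by
        rw [← lintegral_add_left m1]
        refine lintegral_congr fun ω => ?_
        congr 1
        rw [ENNReal.tsum_mul_right,
          aux_neg' (fun x => ENNReal.ofReal (F x)) h ω]

/-- Let `h > 0` and let `F : ℝ → [0, ∞)` be measurable such that the periodization
`S(ω) = ∑_{k ∈ ℤ} F(ω + k/h)` is finite and positive for almost every `ω`, and
`∫_ℝ F < ∞`.  Then for every measurable `g : ℝ → ℝ`,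
`∫ F(ω)·[(1 − g(ω))² + ∑_{k ≠ 0} g(ω + k/h)²] dω ≥ ∫ F(ω)·(S(ω) − F(ω))/S(ω) dω`
(both sides in `[0, ∞]`), and equality holds for the optimal kernel `g(ω) = F(ω)/S(ω)`. -/
theorem optimal_interpolation_kernel (h : ℝ) (hh : 0 < h) (F : ℝ → ℝ)
    (hFmeas : Measurable F) (hF0 : ∀ ω, 0 ≤ F ω)
    (hS : ∀ᵐ ω ∂(volume : Measure ℝ),
      Summable (fun k : ℤ => F (ω + (k : ℝ) / h)) ∧ 0 < ∑' k : ℤ, F (ω + (k : ℝ) / h))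
    (hFint : Integrable F) :
    (∀ g : ℝ → ℝ, Measurable g →
      ∫⁻ ω : ℝ, ENNReal.ofReal (F ω) *
          (ENNReal.ofReal ((1 - g ω) ^ 2) +
            ∑' k : {k : ℤ // k ≠ 0}, ENNReal.ofReal (g (ω + ((k : ℤ) : ℝ) / h) ^ 2)) ≥
        ∫⁻ ω : ℝ, ENNReal.ofReal (F ω *
          ((∑' k : ℤ, F (ω + (k : ℝ) / h)) - F ω) / ∑' k : ℤ, F (ω + (k : ℝ) / h))) ∧
    ∫⁻ ω : ℝ, ENNReal.ofReal (F ω) *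
        (ENNReal.ofReal ((1 - F ω / ∑' k : ℤ, F (ω + (k : ℝ) / h)) ^ 2) +
          ∑' k : {k : ℤ // k ≠ 0},
            ENNReal.ofReal ((F (ω + ((k : ℤ) : ℝ) / h) /
              ∑' j : ℤ, F (ω + ((k : ℤ) : ℝ) / h + (j : ℝ) / h)) ^ 2)) =
      ∫⁻ ω : ℝ, ENNReal.ofReal (F ω *
        ((∑' k : ℤ, F (ω + (k : ℝ) / h)) - F ω) / ∑' k : ℤ, F (ω + (k : ℝ) / h)) := by
  -- basic facts about the periodization, valid a.e.
  have keyTe : ∀ ω : ℝ, Summable (fun k : ℤ => F (ω + (k : ℝ) / h)) →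
      (∑' k : {k : ℤ // k ≠ 0}, ENNReal.ofReal (F (ω + ((k : ℤ) : ℝ) / h)))
        = ENNReal.ofReal ((∑' k : ℤ, F (ω + (k : ℝ) / h)) - F ω) := by
    intro ω hsum
    have hsplit := tsum_int_split' (fun k : ℤ => ENNReal.ofReal (F (ω + (k : ℝ) / h)))
    have h0 : ENNReal.ofReal (F (ω + ((0 : ℤ) : ℝ) / h)) = ENNReal.ofReal (F ω) := by
      norm_num
    have hFS : F ω ≤ ∑' k : ℤ, F (ω + (k : ℝ) / h) := by
      have := Summable.le_tsum hsum 0 (fun j _ => hF0 _)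
      simpa using this
    have hofS : ENNReal.ofReal (∑' k : ℤ, F (ω + (k : ℝ) / h))
        = ∑' k : ℤ, ENNReal.ofReal (F (ω + (k : ℝ) / h)) :=
      ENNReal.ofReal_tsum_of_nonneg (fun k => hF0 _) hsum
    have key : ENNReal.ofReal (F ω) +
        ENNReal.ofReal ((∑' k : ℤ, F (ω + (k : ℝ) / h)) - F ω)
        = ENNReal.ofReal (F ω) +
          ∑' k : {k : ℤ // k ≠ 0}, ENNReal.ofReal (F (ω + ((k : ℤ) : ℝ) / h)) := by
      rw [← ENNReal.ofReal_add (hF0 ω) (by linarith),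
        show F ω + ((∑' k : ℤ, F (ω + (k : ℝ) / h)) - F ω)
          = ∑' k : ℤ, F (ω + (k : ℝ) / h) from by ring, hofS, hsplit, h0]
    exact ((ENNReal.add_right_inj ENNReal.ofReal_ne_top).mp key).symm
  constructor
  · -- the inequality for an arbitrary measurable kernel
    intro g hg
    have hc := chain' h F g hFmeas hg
    refine le_trans ?_ (le_of_eq hc.symm)
    refine lintegral_mono_ae ?_
    filter_upwards [hS] with ω hω
    obtain ⟨hsum, hpos⟩ := hω
    set s := ∑' k : ℤ, F (ω + (k : ℝ) / h) with hs
    have hFS : F ω ≤ s := by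
      have := Summable.le_tsum hsum 0 (fun j _ => hF0 _)
      simpa using this
    have hTe := keyTe ω hsum
    rw [hTe]
    calc ENNReal.ofReal (F ω * (s - F ω) / s)
        ≤ ENNReal.ofReal (F ω * (1 - g ω) ^ 2 + (s - F ω) * g ω ^ 2) := by
          refine ENNReal.ofReal_le_ofReal ?_
          rw [div_le_iff₀ hpos]
          nlinarith [sq_nonneg (s * g ω - F ω), hF0 ω]
      _ = ENNReal.ofReal (F ω) * ENNReal.ofReal ((1 - g ω) ^ 2) +
          ENNReal.ofReal (s - F ω) * ENNReal.ofReal (g ω ^ 2) := by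
          rw [ENNReal.ofReal_add (mul_nonneg (hF0 ω) (sq_nonneg _)) (mul_nonneg (by linarith) (sq_nonneg _)),
            ENNReal.ofReal_mul (hF0 ω), ENNReal.ofReal_mul (by linarith)]
  · -- equality for the optimal kernel
    have hSm : Measurable fun ω : ℝ => ∑' k : ℤ, F (ω + (k : ℝ) / h) := by
      have hrw : (fun ω : ℝ => ∑' k : ℤ, F (ω + (k : ℝ) / h))
          = fun ω : ℝ => (∑' k : ℤ, ENNReal.ofReal (F (ω + (k : ℝ) / h))).toReal := by
        funext ω
        by_cases hsum : Summable (fun k : ℤ => F (ω + (k : ℝ) / h))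
        · rw [← ENNReal.ofReal_tsum_of_nonneg (fun k => hF0 _) hsum,
            ENNReal.toReal_ofReal (tsum_nonneg fun k => hF0 _)]
        · rw [tsum_eq_zero_of_not_summable hsum]
          have htop : ∑' k : ℤ, ENNReal.ofReal (F (ω + (k : ℝ) / h)) = ⊤ := by
            by_contra hne
            exact hsum ((ENNReal.summable_toReal hne).congr
              fun k => ENNReal.toReal_ofReal (hF0 _))
          rw [htop]; simp
      rw [hrw]
      exact (Measurable.ennreal_tsum fun k =>
        (hFmeas.comp (measurable_add_const _)).ennreal_ofReal).ennreal_toReal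
    set g : ℝ → ℝ := fun x => F x / ∑' j : ℤ, F (x + (j : ℝ) / h) with hgdef
    have hg : Measurable g := hFmeas.div hSm
    have hc := chain' h F g hFmeas hg
    refine Eq.trans hc ?_
    refine lintegral_congr_ae ?_
    filter_upwards [hS] with ω hω
    obtain ⟨hsum, hpos⟩ := hω
    set s := ∑' k : ℤ, F (ω + (k : ℝ) / h) with hs
    have hFS : F ω ≤ s := by
      have := Summable.le_tsum hsum 0 (fun j _ => hF0 _)
      simpa using this
    have hTe := keyTe ω hsum
    rw [hTe]
    have hgω : g ω = F ω / s := rfl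
    rw [hgω]
    have hid : F ω * (1 - F ω / s) ^ 2 + (s - F ω) * (F ω / s) ^ 2
        = F ω * (s - F ω) / s := by
      field_simp
      ring
    calc ENNReal.ofReal (F ω) * ENNReal.ofReal ((1 - F ω / s) ^ 2) +
          ENNReal.ofReal (s - F ω) * ENNReal.ofReal ((F ω / s) ^ 2)
        = ENNReal.ofReal (F ω * (1 - F ω / s) ^ 2 + (s - F ω) * (F ω / s) ^ 2) := by
          rw [ENNReal.ofReal_add (mul_nonneg (hF0 ω) (sq_nonneg _)) (mul_nonneg (by linarith) (sq_nonneg _)),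
            ENNReal.ofReal_mul (hF0 ω), ENNReal.ofReal_mul (by linarith)]
      _ = ENNReal.ofReal (F ω * (s - F ω) / s) := by rw [hid]
end

section
/- Let h > 0 and let F, F' : ℝ → (0, ∞) be measurable with ∫_ℝ F < ∞, and suppose S(ω) = ∑_{k ∈ ℤ} F(ω + k/h) and S'(ω) = ∑_{k ∈ ℤ} F'(ω + k/h) are finite for almost every ω. Define the misspecified frequency-domain error E(F', F) = ∫_ℝ F(ω)·[(1 − F'(ω)/S'(ω))² + ∑_{k ∈ ℤ, k ≠ 0} (F'(ω + k/h)/S'(ω + k/h))²] dω and the optimal error E(F, F) = ∫_ℝ F(ω)·(S(ω) − F(ω))/S(ω) dω. Then E(F', F) ≥ E(F, F). -/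
/-!
Write `S = ∑ₖ F(· + k/h)`, `K = F'/S'` and `A(ω) = ∑_{k ≠ 0} K(ω + k/h)²`. Translating each term
of `∫ F(ω) A(ω) dω` by `-k/h` (Tonelli) turns the aliased part of the error into
`∫ (S(ω) - F(ω)) K(ω)² dω`, so `E(F', F) = ∫ [F (1 - K)² + (S - F) K²]`. For each `ω` the integrand
is a quadratic in `K(ω)` whose minimum, attained at `K = F/S`, is `F (S - F)/S`. Since
`0 ≤ K ≤ 1` and `∑ₖ K(ω + k/h) ≤ 1`, the misspecified integrand is at most `2F`, so the comparison
can be made between lower Lebesgue integrals.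
-/

open MeasureTheory
open scoped ENNReal

section NormalizedWeights

variable {ι : Type*} {f : ι → ℝ}

-- If `f` is not summable then `∑' j, f j = 0` and every weight `f i / ∑' j, f j` is `0`.

lemma div_tsum_le_one (hf : 0 ≤ f) (i : ι) : f i / ∑' j, f j ≤ 1 := by
  by_cases hs : Summable f
  · exact div_le_one_of_le₀ (hs.le_tsum i fun j _ => hf j) (tsum_nonneg hf)
  · simp [tsum_eq_zero_of_not_summable hs]

lemma sq_div_tsum_le_div_tsum (hf : 0 ≤ f) (i : ι) :
    (f i / ∑' j, f j) ^ 2 ≤ f i / ∑' j, f j :=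
  pow_le_of_le_one (div_nonneg (hf i) (tsum_nonneg hf)) (div_tsum_le_one hf i) two_ne_zero

lemma summable_sq_div_tsum (hf : 0 ≤ f) : Summable fun i => (f i / ∑' j, f j) ^ 2 := by
  by_cases hs : Summable f
  · exact .of_nonneg_of_le (fun i => sq_nonneg _) (sq_div_tsum_le_div_tsum hf)
      (hs.div_const _)
  · simp [tsum_eq_zero_of_not_summable hs]

lemma tsum_sq_div_tsum_le_one (hf : 0 ≤ f) : ∑' i, (f i / ∑' j, f j) ^ 2 ≤ 1 := by
  by_cases hs : Summable f
  · calc ∑' i, (f i / ∑' j, f j) ^ 2 ≤ ∑' i, f i / ∑' j, f j :=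
          Summable.tsum_le_tsum (sq_div_tsum_le_div_tsum hf) (summable_sq_div_tsum hf)
            (hs.div_const _)
      _ = (∑' j, f j) / ∑' j, f j := tsum_div_const
      _ ≤ 1 := div_self_le_one _
  · simp [tsum_eq_zero_of_not_summable hs]

end NormalizedWeights

lemma tsum_subtype_ne_eq_sub {α β : Type*} [UniformSpace α] [AddCommGroup α]
    [IsUniformAddGroup α] [CompleteSpace α] [T2Space α] {f : β → α} (hf : Summable f) (b : β) :
    ∑' x : {x // x ≠ b}, f x = ∑' x, f x - f b := by
  rw [← hf.tsum_subtype_add_tsum_subtype_compl {b}, tsum_singleton, add_sub_cancel_left]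
  rfl

lemma lintegral_mul_tsum_comp_add {G ι : Type*} [MeasurableSpace G] [AddGroup G]
    [MeasurableAdd G] {μ : Measure G} [μ.IsAddRightInvariant] [Countable ι] {f g : G → ℝ≥0∞}
    (hf : Measurable f) (hg : Measurable g) (c : ι → G) :
    ∫⁻ x, f x * ∑' i, g (x + c i) ∂μ = ∫⁻ x, (∑' i, f (x - c i)) * g x ∂μ := by
  calc ∫⁻ x, f x * ∑' i, g (x + c i) ∂μ = ∑' i, ∫⁻ x, f x * g (x + c i) ∂μ := by
        simp_rw [← ENNReal.tsum_mul_left]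
        exact lintegral_tsum fun i => (hf.mul (hg.comp (measurable_add_const _))).aemeasurable
    _ = ∑' i, ∫⁻ x, f (x - c i) * g x ∂μ := by
        congr with i
        rw [← lintegral_add_right_eq_self (fun x => f (x - c i) * g x) (c i)]
        simp only [add_sub_cancel_right]
    _ = ∫⁻ x, (∑' i, f (x - c i)) * g x ∂μ := by
        simp_rw [← ENNReal.tsum_mul_right]
        exact (lintegral_tsum fun i =>
          ((hf.comp (measurable_sub_const' _)).mul hg).aemeasurable).symm

lemma integral_le_integral_of_lintegral_ofReal_le {α : Type*} [MeasurableSpace α]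
    {μ : Measure α} {f g : α → ℝ} (hf₀ : 0 ≤ᵐ[μ] f) (hf : AEStronglyMeasurable f μ)
    (hg₀ : 0 ≤ᵐ[μ] g) (hg : Integrable g μ)
    (hfg : ∫⁻ x, ENNReal.ofReal (f x) ∂μ ≤ ∫⁻ x, ENNReal.ofReal (g x) ∂μ) :
    ∫ x, f x ∂μ ≤ ∫ x, g x ∂μ := by
  rw [integral_eq_lintegral_of_nonneg_ae hf₀ hf, integral_eq_lintegral_of_nonneg_ae hg₀ hg.1]
  exact ENNReal.toReal_mono ((lintegral_ofReal_ne_top_iff_integrable hg.1 hg₀).2 hg) hfg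

/-- The right side exceeds the left by `(S a - F)² / S`. -/
lemma mul_sub_div_le_mul_one_sub_sq_add {F S : ℝ} (hS : 0 < S) (a : ℝ) :
    F * (S - F) / S ≤ F * (1 - a) ^ 2 + (S - F) * a ^ 2 := by
  rw [div_le_iff₀ hS]
  nlinarith [sq_nonneg (S * a - F)]

noncomputable section

def periodization (h : ℝ) (G : ℝ → ℝ) (ω : ℝ) : ℝ :=
  ∑' k : ℤ, G (ω + k / h)

/-- The Fourier transform `K̂ = G / S` of the interpolation kernel built from the density `G`. -/
def kernelFT (h : ℝ) (G : ℝ → ℝ) (ω : ℝ) : ℝ :=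
  G ω / periodization h G ω

def aliasing (h : ℝ) (G : ℝ → ℝ) (ω : ℝ) : ℝ :=
  ∑' k : {k : ℤ // k ≠ 0}, kernelFT h G (ω + ((k : ℤ) : ℝ) / h) ^ 2

def misspecifiedErrorDensity (h : ℝ) (F F' : ℝ → ℝ) (ω : ℝ) : ℝ :=
  F ω * ((1 - kernelFT h F' ω) ^ 2 + aliasing h F' ω)

def optimalErrorDensity (h : ℝ) (F : ℝ → ℝ) (ω : ℝ) : ℝ :=
  F ω * (periodization h F ω - F ω) / periodization h F ω

end

section Periodization

variable {h : ℝ} {G : ℝ → ℝ}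

lemma periodization_add_int_div (ω : ℝ) (k : ℤ) :
    periodization h G (ω + k / h) = periodization h G ω := by
  rw [periodization, periodization, ← (Equiv.addLeft k).tsum_eq (fun j : ℤ => G (ω + j / h))]
  congr with j
  simp only [Equiv.coe_addLeft, Int.cast_add]
  ring_nf

lemma measurable_periodization (hG : Measurable G) : Measurable (periodization h G) :=
  Measurable.tsum fun _ => hG.comp (measurable_add_const _)

lemma le_periodization (hG : 0 ≤ G) {ω : ℝ} (hs : Summable fun k : ℤ => G (ω + k / h)) :
    G ω ≤ periodization h G ω := by
  simpa [periodization] using hs.le_tsum 0 fun k _ => hG _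

lemma tsum_ne_zero_ofReal_sub_int_div (hG : 0 ≤ G) {ω : ℝ}
    (hs : Summable fun k : ℤ => G (ω + k / h)) :
    ∑' k : {k : ℤ // k ≠ 0}, ENNReal.ofReal (G (ω - ((k : ℤ) : ℝ) / h)) =
      ENNReal.ofReal (periodization h G ω - G ω) := by
  let neg : {k : ℤ // k ≠ 0} ≃ {k : ℤ // k ≠ 0} :=
    (Equiv.neg ℤ).subtypeEquiv fun _ => neg_ne_zero.symm
  calc ∑' k : {k : ℤ // k ≠ 0}, ENNReal.ofReal (G (ω - ((k : ℤ) : ℝ) / h))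
      = ∑' k : {k : ℤ // k ≠ 0}, ENNReal.ofReal (G (ω + ((k : ℤ) : ℝ) / h)) := by
        rw [← neg.tsum_eq]
        congr with k
        simp [neg, Equiv.subtypeEquiv, neg_div, sub_eq_add_neg]
    _ = ENNReal.ofReal (∑' k : {k : ℤ // k ≠ 0}, G (ω + ((k : ℤ) : ℝ) / h)) :=
        (ENNReal.ofReal_tsum_of_nonneg (fun _ => hG _)
          (hs.comp_injective Subtype.val_injective)).symm
    _ = ENNReal.ofReal (periodization h G ω - G ω) := by
        rw [tsum_subtype_ne_eq_sub hs 0]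
        simp [periodization]

end Periodization

section KernelFT

variable {h : ℝ} {G : ℝ → ℝ}

lemma kernelFT_nonneg (hG : 0 ≤ G) (ω : ℝ) : 0 ≤ kernelFT h G ω :=
  div_nonneg (hG ω) (tsum_nonneg fun _ => hG _)

lemma kernelFT_le_one (hG : 0 ≤ G) (ω : ℝ) : kernelFT h G ω ≤ 1 := by
  simpa [kernelFT, periodization] using
    div_tsum_le_one (f := fun k : ℤ => G (ω + k / h)) (fun _ => hG _) 0

lemma kernelFT_add_int_div (ω : ℝ) (k : ℤ) :
    kernelFT h G (ω + k / h) = G (ω + k / h) / periodization h G ω := by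
  rw [kernelFT, periodization_add_int_div]

lemma measurable_kernelFT (hG : Measurable G) : Measurable (kernelFT h G) :=
  hG.div (measurable_periodization hG)

lemma summable_kernelFT_sq (hG : 0 ≤ G) (ω : ℝ) :
    Summable fun k : ℤ => kernelFT h G (ω + k / h) ^ 2 := by
  simp_rw [kernelFT_add_int_div]
  exact summable_sq_div_tsum fun _ => hG _

lemma aliasing_nonneg (ω : ℝ) : 0 ≤ aliasing h G ω :=
  tsum_nonneg fun _ => sq_nonneg _

lemma aliasing_le_one (hG : 0 ≤ G) (ω : ℝ) : aliasing h G ω ≤ 1 :=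
  calc aliasing h G ω ≤ ∑' k : ℤ, kernelFT h G (ω + k / h) ^ 2 :=
        (summable_kernelFT_sq hG ω).tsum_subtype_le _ {k | k ≠ 0} fun _ => sq_nonneg _
    _ ≤ 1 := by
        simp_rw [kernelFT_add_int_div]
        exact tsum_sq_div_tsum_le_one fun _ => hG _

lemma measurable_aliasing (hG : Measurable G) : Measurable (aliasing h G) :=
  Measurable.tsum fun _ => ((measurable_kernelFT hG).comp (measurable_add_const _)).pow_const 2

end KernelFT

section ErrorDensities

variable {h : ℝ} {F F' : ℝ → ℝ}

lemma misspecifiedErrorDensity_nonneg (hF : 0 ≤ F) (ω : ℝ) :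
    0 ≤ misspecifiedErrorDensity h F F' ω :=
  mul_nonneg (hF ω) (add_nonneg (sq_nonneg _) (aliasing_nonneg ω))

lemma misspecifiedErrorDensity_le (hF : 0 ≤ F) (hF' : 0 ≤ F') (ω : ℝ) :
    misspecifiedErrorDensity h F F' ω ≤ 2 * F ω := by
  have hK : (1 - kernelFT h F' ω) ^ 2 ≤ 1 :=
    pow_le_one₀ (sub_nonneg.2 (kernelFT_le_one hF' ω))
      (sub_le_self _ (kernelFT_nonneg hF' ω))
  have hA := aliasing_le_one (h := h) hF' ω
  rw [misspecifiedErrorDensity, mul_comm 2]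
  exact mul_le_mul_of_nonneg_left (by linarith) (hF ω)

lemma integrable_misspecifiedErrorDensity (hFm : Measurable F) (hF'm : Measurable F')
    (hF : 0 ≤ F) (hF' : 0 ≤ F') (hFi : Integrable F) :
    Integrable (misspecifiedErrorDensity h F F') := by
  refine (hFi.const_mul 2).mono' ?_ (ae_of_all _ fun ω => ?_)
  · exact (hFm.mul ((((measurable_kernelFT hF'm).const_sub 1).pow_const 2).add
      (measurable_aliasing hF'm))).aestronglyMeasurable
  · rw [Real.norm_of_nonneg (misspecifiedErrorDensity_nonneg hF ω)]
    exact misspecifiedErrorDensity_le hF hF' ω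

lemma optimalErrorDensity_nonneg (hF : 0 ≤ F) {ω : ℝ}
    (hs : Summable fun k : ℤ => F (ω + k / h)) : 0 ≤ optimalErrorDensity h F ω :=
  div_nonneg (mul_nonneg (hF ω) (sub_nonneg.2 (le_periodization hF hs)))
    (tsum_nonneg fun _ => hF _)

lemma measurable_optimalErrorDensity (hFm : Measurable F) :
    Measurable (optimalErrorDensity h F) :=
  (hFm.mul ((measurable_periodization hFm).sub hFm)).div (measurable_periodization hFm)

lemma lintegral_ofReal_mul_aliasing (hFm : Measurable F) (hF'm : Measurable F')
    (hF : 0 ≤ F) (hF' : 0 ≤ F')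
    (hs : ∀ᵐ ω, Summable fun k : ℤ => F (ω + k / h)) :
    ∫⁻ ω, ENNReal.ofReal (F ω * aliasing h F' ω) =
      ∫⁻ ω, ENNReal.ofReal ((periodization h F ω - F ω) * kernelFT h F' ω ^ 2) := by
  have hsplit (ω : ℝ) : ENNReal.ofReal (F ω * aliasing h F' ω) = ENNReal.ofReal (F ω) *
      ∑' k : {k : ℤ // k ≠ 0}, ENNReal.ofReal (kernelFT h F' (ω + ((k : ℤ) : ℝ) / h) ^ 2) := by
    rw [ENNReal.ofReal_mul (hF ω), aliasing, ENNReal.ofReal_tsum_of_nonneg (fun _ => sq_nonneg _)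
      ((summable_kernelFT_sq hF' ω).comp_injective Subtype.val_injective)]
  simp_rw [hsplit]
  rw [lintegral_mul_tsum_comp_add hFm.ennreal_ofReal
    ((measurable_kernelFT hF'm).pow_const 2).ennreal_ofReal]
  refine lintegral_congr_ae (hs.mono fun ω hω => ?_)
  dsimp only
  rw [ENNReal.ofReal_mul' (sq_nonneg _), tsum_ne_zero_ofReal_sub_int_div hF hω]

lemma lintegral_ofReal_optimalErrorDensity_le (hFm : Measurable F) (hF'm : Measurable F')
    (hF : ∀ ω, 0 < F ω) (hF' : 0 ≤ F')
    (hs : ∀ᵐ ω, Summable fun k : ℤ => F (ω + k / h)) :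
    ∫⁻ ω, ENNReal.ofReal (optimalErrorDensity h F ω) ≤
      ∫⁻ ω, ENNReal.ofReal (misspecifiedErrorDensity h F F' ω) := by
  have hF₀ : 0 ≤ F := fun ω => (hF ω).le
  have hfirst : Measurable fun ω => ENNReal.ofReal (F ω * (1 - kernelFT h F' ω) ^ 2) :=
    (hFm.mul (((measurable_kernelFT hF'm).const_sub 1).pow_const 2)).ennreal_ofReal
  calc ∫⁻ ω, ENNReal.ofReal (optimalErrorDensity h F ω)
      ≤ ∫⁻ ω, ENNReal.ofReal (F ω * (1 - kernelFT h F' ω) ^ 2) +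
          ENNReal.ofReal ((periodization h F ω - F ω) * kernelFT h F' ω ^ 2) := by
        refine lintegral_mono_ae (hs.mono fun ω hω => ?_)
        have hFS := le_periodization hF₀ hω
        rw [← ENNReal.ofReal_add (mul_nonneg (hF ω).le (sq_nonneg _))
          (mul_nonneg (sub_nonneg.2 hFS) (sq_nonneg _))]
        exact ENNReal.ofReal_le_ofReal
          (mul_sub_div_le_mul_one_sub_sq_add ((hF ω).trans_le hFS) _)
    _ = ∫⁻ ω, ENNReal.ofReal (F ω * (1 - kernelFT h F' ω) ^ 2) +
          ENNReal.ofReal (F ω * aliasing h F' ω) := by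
        rw [lintegral_add_left hfirst, lintegral_add_left hfirst,
          lintegral_ofReal_mul_aliasing hFm hF'm hF₀ hF' hs]
    _ = ∫⁻ ω, ENNReal.ofReal (misspecifiedErrorDensity h F F' ω) := by
        congr with ω
        rw [misspecifiedErrorDensity, mul_add, ENNReal.ofReal_add
          (mul_nonneg (hF ω).le (sq_nonneg _)) (mul_nonneg (hF ω).le (aliasing_nonneg ω))]

end ErrorDensities

theorem misspecified_error_ge_optimal_error_general (h : ℝ) (F F' : ℝ → ℝ)
    (hFmeas : Measurable F) (hF'meas : Measurable F')
    (hFpos : ∀ ω, 0 < F ω) (hF'pos : ∀ ω, 0 < F' ω)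
    (hFint : Integrable F)
    (hS : ∀ᵐ ω ∂(volume : Measure ℝ), Summable (fun k : ℤ => F (ω + (k : ℝ) / h))) :
    (∫ ω : ℝ, F ω *
        ((1 - F' ω / ∑' k : ℤ, F' (ω + (k : ℝ) / h)) ^ 2 +
          ∑' k : {k : ℤ // k ≠ 0},
            (F' (ω + ((k : ℤ) : ℝ) / h) /
              ∑' j : ℤ, F' (ω + ((k : ℤ) : ℝ) / h + (j : ℝ) / h)) ^ 2)) ≥
    ∫ ω : ℝ, F ω * ((∑' k : ℤ, F (ω + (k : ℝ) / h)) - F ω) /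
        ∑' k : ℤ, F (ω + (k : ℝ) / h) := by
  have hF : 0 ≤ F := fun ω => (hFpos ω).le
  have hF' : 0 ≤ F' := fun ω => (hF'pos ω).le
  change ∫ ω, optimalErrorDensity h F ω ≤ ∫ ω, misspecifiedErrorDensity h F F' ω
  exact integral_le_integral_of_lintegral_ofReal_le
    (hS.mono fun ω hω => optimalErrorDensity_nonneg hF hω)
    (measurable_optimalErrorDensity hFmeas).aestronglyMeasurable
    (ae_of_all _ (misspecifiedErrorDensity_nonneg hF))
    (integrable_misspecifiedErrorDensity hFmeas hF'meas hF hF' hFint)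
    (lintegral_ofReal_optimalErrorDensity_le hFmeas hF'meas hFpos hF' hS)

/-- A misspecified interpolation kernel never beats the optimal one: for `h > 0`,
positive measurable spectral densities `F` (true, integrable) and `F'` (used), with
periodizations `S(ω) = ∑_{k ∈ ℤ} F(ω + k/h)` and `S'(ω) = ∑_{k ∈ ℤ} F'(ω + k/h)`
finite for almost every `ω`, the misspecified frequency-domain error
`E(F', F) = ∫ F(ω)·[(1 − F'(ω)/S'(ω))² + ∑_{k ≠ 0} (F'(ω + k/h)/S'(ω + k/h))²] dω`
satisfies `E(F', F) ≥ E(F, F) = ∫ F(ω)·(S(ω) − F(ω))/S(ω) dω`. -/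
theorem misspecified_error_ge_optimal_error (h : ℝ) (hh : 0 < h) (F F' : ℝ → ℝ)
    (hFmeas : Measurable F) (hF'meas : Measurable F')
    (hFpos : ∀ ω, 0 < F ω) (hF'pos : ∀ ω, 0 < F' ω)
    (hFint : Integrable F)
    (hS : ∀ᵐ ω ∂(volume : Measure ℝ), Summable (fun k : ℤ => F (ω + (k : ℝ) / h)))
    (hS' : ∀ᵐ ω ∂(volume : Measure ℝ), Summable (fun k : ℤ => F' (ω + (k : ℝ) / h))) :
    (∫ ω : ℝ, F ω *
        ((1 - F' ω / ∑' k : ℤ, F' (ω + (k : ℝ) / h)) ^ 2 +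
          ∑' k : {k : ℤ // k ≠ 0},
            (F' (ω + ((k : ℤ) : ℝ) / h) /
              ∑' j : ℤ, F' (ω + ((k : ℤ) : ℝ) / h + (j : ℝ) / h)) ^ 2)) ≥
    ∫ ω : ℝ, F ω * ((∑' k : ℤ, F (ω + (k : ℝ) / h)) - F ω) /
        ∑' k : ℤ, F (ω + (k : ℝ) / h) :=
  misspecified_error_ge_optimal_error_general h F F' hFmeas hF'meas hFpos hF'pos hFint hS
end

section
/- For θ > 0 and h > 0, with c = coth(π θ h), the interpolation error of the optimal exponential-spectral-density interpolant admits the bound: the exact closed form π − (1/(π h c))·[π/(2θ) + (c² − 1)·(π/(4θ))·(1 − e^{−2πhθ}(1 + 2πhθ))] is nonnegative and tends to 0 as h → 0⁺ (for fixed θ). -/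
open Real Filter Topology

/-!
Writing `t = π θ h`, the closed form collapses to `π (coth (2t) - 1 / (2t))`. For `s > 0`,
`coth s - 1 / s ≥ 0` amounts to `sinh s ≤ s cosh s`, which is the mean value theorem for `sinh`
together with the monotonicity of `cosh` on `[0, ∞)`. Conversely `s ≤ sinh s` gives
`coth s - 1 / s ≤ (cosh s - 1) / s`, a difference quotient tending to `cosh' 0 = sinh 0 = 0`.
-/

theorem sinh_le_mul_cosh {s : ℝ} (hs : 0 ≤ s) : sinh s ≤ s * cosh s := by
  rcases hs.eq_or_lt with rfl | hs
  · simp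
  obtain ⟨c, ⟨hc0, hcs⟩, hc⟩ := exists_deriv_eq_slope sinh hs
    continuous_sinh.continuousOn differentiable_sinh.differentiableOn
  rw [Real.deriv_sinh, sinh_zero, sub_zero, sub_zero, eq_div_iff hs.ne'] at hc
  rw [← hc, mul_comm]
  gcongr
  exact cosh_le_cosh.2 (by rw [abs_of_pos hc0, abs_of_pos hs]; exact hcs.le)

theorem coth_sub_inv_nonneg {s : ℝ} (hs : 0 < s) : 0 ≤ coth s - 1 / s := by
  rw [coth, sub_nonneg, div_le_div_iff₀ hs (sinh_pos_iff.2 hs), one_mul, mul_comm]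
  exact sinh_le_mul_cosh hs.le

theorem coth_sub_inv_le {s : ℝ} (hs : 0 < s) : coth s - 1 / s ≤ (cosh s - 1) / s := by
  rw [sub_div, coth]
  gcongr
  exact self_le_sinh_iff.2 hs.le

theorem tendsto_coth_sub_inv_nhdsGT_zero :
    Tendsto (fun s => coth s - 1 / s) (𝓝[>] 0) (𝓝 0) := by
  have hslope : Tendsto (fun s => (cosh s - 1) / s) (𝓝[>] 0) (𝓝 0) := by
    simpa [div_eq_inv_mul] using (hasDerivAt_cosh 0).tendsto_slope_zero_right
  refine squeeze_zero' ?_ ?_ hslope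
  · filter_upwards [self_mem_nhdsWithin] with s hs using coth_sub_inv_nonneg hs
  · filter_upwards [self_mem_nhdsWithin] with s hs using coth_sub_inv_le hs

theorem interpolation_error_eq {θ h : ℝ} (hθ : θ ≠ 0) (hh : h ≠ 0) :
    π - 1 / (π * h * coth (π * θ * h)) *
        (π / (2 * θ) + (coth (π * θ * h) ^ 2 - 1) * (π / (4 * θ)) *
          (1 - exp (-(2 * π * h * θ)) * (1 + 2 * π * h * θ)))
      = π * (coth (2 * π * θ * h) - 1 / (2 * π * θ * h)) := by
  have ht : π * θ * h ≠ 0 := by positivity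
  obtain ⟨E, hE0, hE⟩ : ∃ E, 0 < E ∧ exp (π * θ * h) = E := ⟨_, exp_pos _, rfl⟩
  have hE1 : E ^ 2 - 1 ≠ 0 := by
    rw [sub_ne_zero, ← hE, ← exp_nat_mul, Ne, exp_eq_one_iff]; push_cast; positivity
  have hE2 : E ^ 4 - 1 ≠ 0 := by
    rw [show E ^ 4 - 1 = (E ^ 2 - 1) * (E ^ 2 + 1) by ring]; positivity
  have h2 : exp (2 * π * θ * h) = E ^ 2 := by rw [← hE, ← exp_nat_mul]; push_cast; ring_nf
  have hneg : exp (-(π * θ * h)) = E⁻¹ := by rw [exp_neg, hE]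
  have hneg2 : exp (-(2 * π * θ * h)) = (E ^ 2)⁻¹ := by rw [exp_neg, h2]
  rw [show 2 * π * h * θ = 2 * π * θ * h by ring]
  simp only [coth, cosh_eq, sinh_eq, hE, hneg, h2, hneg2]
  field_simp
  ring

/-- For `θ > 0` and `h > 0`, with `c = coth(π θ h)`, the exact closed form of the
optimal interpolation error for the exponential spectral density,
`π − (1/(πhc))·[π/(2θ) + (c² − 1)·(π/(4θ))·(1 − e^{−2πhθ}(1 + 2πhθ))]`,
is nonnegative and tends to `0` as `h → 0⁺` (for fixed `θ`). -/
theorem interpolation_error_closed_form_nonneg_and_vanishing (θ : ℝ) (hθ : 0 < θ) :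
    (∀ h : ℝ, 0 < h →
      0 ≤ π - 1 / (π * h * coth (π * θ * h)) *
        (π / (2 * θ) + (coth (π * θ * h) ^ 2 - 1) * (π / (4 * θ)) *
          (1 - Real.exp (-(2 * π * h * θ)) * (1 + 2 * π * h * θ)))) ∧
    Tendsto
      (fun h : ℝ =>
        π - 1 / (π * h * coth (π * θ * h)) *
          (π / (2 * θ) + (coth (π * θ * h) ^ 2 - 1) * (π / (4 * θ)) *
            (1 - Real.exp (-(2 * π * h * θ)) * (1 + 2 * π * h * θ))))
      (𝓝[>] 0) (𝓝 0) := by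
  have hscale : Tendsto (fun h : ℝ => 2 * π * θ * h) (𝓝[>] 0) (𝓝[>] 0) := by
    refine tendsto_nhdsWithin_iff.2 ⟨?_, ?_⟩
    · simpa using ((continuous_const_mul (2 * π * θ)).tendsto 0).mono_left nhdsWithin_le_nhds
    · filter_upwards [self_mem_nhdsWithin] with h (hh : 0 < h)
      exact mul_pos (by positivity) hh
  refine ⟨fun h hh => ?_, ?_⟩
  · rw [interpolation_error_eq hθ.ne' hh.ne']
    exact mul_nonneg pi_pos.le (coth_sub_inv_nonneg (by positivity))
  · have hlim := (tendsto_coth_sub_inv_nhdsGT_zero.comp hscale).const_mul π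
    rw [mul_zero] at hlim
    refine hlim.congr' ?_
    filter_upwards [self_mem_nhdsWithin] with h hh
    exact (interpolation_error_eq hθ.ne' (ne_of_gt hh)).symm
end
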